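/- Let Δ be a non-redundant theory (for each φ ∈ Δ, Mod*(Δ \ {φ}) ⊄ Mod*(Δ)) and Γ result from Δ by one reduction step (replacing A ⇒ B by A ∪ (S(C,A)⋆ ⊗ D) ⇒ B for some other C ⇒ D ∈ Δ). Then Γ is non-redundant. -/
import Mathlib


/-- A (complete) residuated lattice: a complete lattice with a commutative
monoid operation `mul` with unit `⊤` and residuum `resid` satisfying adjointness. -/
class ResLat (L : Type*) extends CompleteLattice L where
  mul : L → L → L
  resid : L → L → L
  mul_comm : ∀ a b : L, mul a b = mul b a
  mul_assoc : ∀ a b c : L, mul (mul a b) c = mul a (mul b c)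
  mul_top : ∀ a : L, mul a ⊤ = a
  adjoint : ∀ a b c : L, mul a b ≤ c ↔ a ≤ resid b c

open ResLat

/-- Subsethood degree `S(A,B) = ⨅ y, A y → B y`. -/
def Sdeg {L Y : Type*} [ResLat L] (A B : Y → L) : L := ⨅ y, resid (A y) (B y)

/-- Idempotent truth-stressing hedge. -/
def IsHedge {L : Type*} [ResLat L] (star : L → L) : Prop :=
  star ⊤ = ⊤ ∧ (∀ a : L, star a ≤ a) ∧
  (∀ a b : L, star (resid a b) ≤ resid (star a) (star b)) ∧
  (∀ a : L, star (star a) = star a)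

/-- Models of a theory (a set of graded attribute implications). -/
def Models {L Y : Type*} [ResLat L] (star : L → L)
    (T : Set ((Y → L) × (Y → L))) : Set (Y → L) :=
  {M | ∀ p ∈ T, star (Sdeg p.1 M) ≤ Sdeg p.2 M}

/-- A theory is non-redundant if no proper subset has the same models. -/
def Nonredundant {L Y : Type*} [ResLat L] (star : L → L)
    (T : Set ((Y → L) × (Y → L))) : Prop :=
  ∀ T' : Set ((Y → L) × (Y → L)), T' ⊂ T → Models star T' ≠ Models star T

section Helpers

variable {L : Type*} [ResLat L]

lemma RL.top_mul (a : L) : mul (⊤ : L) a = a := by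
  rw [ResLat.mul_comm]; exact mul_top a

lemma RL.mul_resid_le (a b : L) : mul (resid a b) a ≤ b :=
  (adjoint _ _ _).mpr le_rfl

lemma RL.mul_mono {a a' b b' : L} (ha : a ≤ a') (hb : b ≤ b') :
    mul a b ≤ mul a' b' := by
  have h3 : mul a b' ≤ mul a' b' :=
    (adjoint _ _ _).mpr (ha.trans ((adjoint _ _ _).mp le_rfl))
  refine le_trans ?_ h3
  rw [ResLat.mul_comm a b, ResLat.mul_comm a b']
  exact (adjoint _ _ _).mpr (hb.trans ((adjoint _ _ _).mp le_rfl))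

lemma RL.resid_le_resid {a a' b b' : L} (ha : a' ≤ a) (hb : b ≤ b') :
    resid a b ≤ resid a' b' :=
  (adjoint _ _ _).mp (((RL.mul_mono le_rfl ha).trans (RL.mul_resid_le a b)).trans hb)

lemma RL.resid_eq_top_iff {a b : L} : resid a b = ⊤ ↔ a ≤ b := by
  rw [eq_top_iff, ← adjoint, RL.top_mul]

lemma RL.star_mono {star : L → L} (hs : IsHedge star) {a b : L} (h : a ≤ b) :
    star a ≤ star b := by
  obtain ⟨h1, h2, h3, h4⟩ := hs
  have h5 : star (resid a b) ≤ resid (star a) (star b) := h3 a b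
  rw [RL.resid_eq_top_iff.mpr h, h1] at h5
  have h6 := (adjoint ⊤ (star a) (star b)).mpr h5
  rwa [RL.top_mul] at h6

lemma RL.mul_sup_le_iff {a x y c : L} :
    mul a (x ⊔ y) ≤ c ↔ mul a x ≤ c ∧ mul a y ≤ c := by
  rw [ResLat.mul_comm a (x ⊔ y), adjoint, sup_le_iff, ← adjoint, ← adjoint,
    ResLat.mul_comm x a, ResLat.mul_comm y a]

variable {Y : Type*}

lemma RL.Sdeg_le (A B : Y → L) (y : Y) : Sdeg A B ≤ resid (A y) (B y) :=
  iInf_le _ y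

lemma RL.mul_Sdeg_le (A B : Y → L) (y : Y) : mul (Sdeg A B) (A y) ≤ B y :=
  (adjoint _ _ _).mpr (RL.Sdeg_le A B y)

lemma RL.Sdeg_trans (C A M : Y → L) :
    mul (Sdeg C A) (Sdeg A M) ≤ Sdeg C M := by
  refine le_iInf fun y => (adjoint _ _ _).mp ?_
  rw [ResLat.mul_comm (Sdeg C A) (Sdeg A M), ResLat.mul_assoc]
  exact le_trans (RL.mul_mono le_rfl (RL.mul_Sdeg_le C A y)) (RL.mul_Sdeg_le A M y)

lemma RL.Sdeg_anti {A A' : Y → L} (h : ∀ y, A y ≤ A' y) (M : Y → L) :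
    Sdeg A' M ≤ Sdeg A M :=
  le_iInf fun y => (iInf_le _ y).trans (RL.resid_le_resid (h y) le_rfl)

/-- Key lemma: if `M` is a model of `C ⇒ D`, then
`star (S(A,M)) ≤ S(A ∪ S(C,A)*⊗D, M)`. -/
lemma RL.key {star : L → L} (hs : IsHedge star) (A C D M : Y → L)
    (hCDm : star (Sdeg C M) ≤ Sdeg D M) :
    star (Sdeg A M) ≤ Sdeg (fun y => A y ⊔ mul (star (Sdeg C A)) (D y)) M := by
  obtain ⟨h1, h2, h3, h4⟩ := hs
  refine le_iInf fun y => (adjoint _ _ _).mp ?_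
  show mul (star (Sdeg A M)) (A y ⊔ mul (star (Sdeg C A)) (D y)) ≤ M y
  rw [RL.mul_sup_le_iff]
  constructor
  · exact (RL.mul_mono (h2 _) le_rfl).trans (RL.mul_Sdeg_le A M y)
  · have hca : star (Sdeg C A) ≤ resid (star (Sdeg A M)) (star (Sdeg C M)) := by
      refine le_trans (RL.star_mono ⟨h1, h2, h3, h4⟩ ?_) (h3 _ _)
      exact (adjoint _ _ _).mp (RL.Sdeg_trans C A M)
    have h5 : mul (star (Sdeg C A)) (star (Sdeg A M)) ≤ star (Sdeg C M) :=
      (adjoint _ _ _).mpr hca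
    calc mul (star (Sdeg A M)) (mul (star (Sdeg C A)) (D y))
        = mul (mul (star (Sdeg C A)) (star (Sdeg A M))) (D y) := by
          rw [← ResLat.mul_assoc, ResLat.mul_comm (star (Sdeg A M)) (star (Sdeg C A))]
      _ ≤ mul (Sdeg D M) (D y) := RL.mul_mono (h5.trans hCDm) le_rfl
      _ ≤ M y := RL.mul_Sdeg_le D M y

lemma RL.models_anti {star : L → L} {T' T : Set ((Y → L) × (Y → L))}
    (h : T' ⊆ T) : Models star T ⊆ Models star T' :=
  fun _ hM p hp => hM p (h hp)

end Helpers

theorem reduction_preserves_nonredundancy {L Y : Type*} [ResLat L] [Finite L]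
    [Fintype Y] [Nonempty Y]
    (star : L → L) (hs : IsHedge star)
    (Δ Γ : Set ((Y → L) × (Y → L))) (hfin : Δ.Finite)
    (A B C D : Y → L)
    (hAB : (A, B) ∈ Δ) (hCD : (C, D) ∈ Δ) (hne : (A, B) ≠ (C, D))
    (hΓ : Γ = (Δ \ {(A, B)}) ∪
      {((fun y => A y ⊔ mul (star (Sdeg C A)) (D y)), B)})
    (hnr : Nonredundant star Δ) :
    Nonredundant star Γ := by
  set A' : Y → L := fun y => A y ⊔ mul (star (Sdeg C A)) (D y) with hA'def
  -- Models of Γ coincide with models of Δ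
  have hA'ge : ∀ y, A y ≤ A' y := fun y => le_sup_left
  have hmodΓΔ : Models star Γ = Models star Δ := by
    ext M
    constructor
    · intro hM p hp
      by_cases hpAB : p = (A, B)
      · subst hpAB
        have hCDmem : (C, D) ∈ Γ := by
          rw [hΓ]
          exact Set.mem_union_left _ ⟨hCD, fun h => hne (Set.mem_singleton_iff.mp h).symm⟩
        have hCDm : star (Sdeg C M) ≤ Sdeg D M := hM (C, D) hCDmem
        have h5 : star (Sdeg A M) ≤ Sdeg A' M := RL.key hs A C D M hCDm
        have h6 : star (Sdeg A' M) ≤ Sdeg B M := by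
          refine hM (A', B) ?_
          rw [hΓ]; exact Set.mem_union_right _ rfl
        calc star (Sdeg A M) = star (star (Sdeg A M)) := (hs.2.2.2 _).symm
          _ ≤ star (Sdeg A' M) := RL.star_mono hs h5
          _ ≤ Sdeg B M := h6
      · refine hM p ?_
        rw [hΓ]
        exact Set.mem_union_left _ ⟨hp, fun h => hpAB (Set.mem_singleton_iff.mp h)⟩
    · intro hM p hp
      rw [hΓ] at hp
      rcases hp with ⟨hpΔ, -⟩ | hp
      · exact hM p hpΔ
      · rw [Set.mem_singleton_iff] at hp
        subst hp
        exact le_trans (RL.star_mono hs (RL.Sdeg_anti hA'ge M)) (hM (A, B) hAB)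
  -- the new implication is not already in Δ \ {(A,B)}
  have hA'B : ((A', B) : (Y → L) × (Y → L)) ∉ Δ \ {(A, B)} := by
    intro hmem
    have hΓeq : Γ = Δ \ {(A, B)} := by
      rw [hΓ]
      exact Set.union_eq_self_of_subset_right (Set.singleton_subset_iff.mpr hmem)
    exact hnr (Δ \ {(A, B)}) (Set.sdiff_singleton_ssubset.mpr hAB) (hΓeq ▸ hmodΓΔ)
  -- main argument
  intro T' hT' heq
  by_cases hmem : ((A', B) : (Y → L) × (Y → L)) ∈ T'
  · -- case: the new implication is in T'
    set E : Set ((Y → L) × (Y → L)) := T' \ {(A', B)} with hEdef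
    have hEsub : E ⊆ Δ \ {(A, B)} := by
      intro x hx
      have hxΓ : x ∈ Γ := hT'.subset hx.1
      rw [hΓ] at hxΓ
      rcases hxΓ with h | h
      · exact h
      · exact absurd h hx.2
    have hEne : E ≠ Δ \ {(A, B)} := by
      intro hEeq
      refine hT'.not_subset ?_
      rw [hΓ]
      intro x hx
      rcases hx with h | h
      · rw [← hEeq] at h; exact h.1
      · rw [Set.mem_singleton_iff] at h; subst h; exact hmem
    obtain ⟨x, hx1, hx2⟩ := Set.exists_of_ssubset (hEsub.ssubset_of_ne hEne)
    set Sig : Set ((Y → L) × (Y → L)) := E ∪ {(A, B)} with hSigdef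
    have hSigsub : Sig ⊂ Δ := by
      refine ssubset_of_subset_of_ne ?_ ?_
      · intro z hz
        rcases hz with h | h
        · exact (hEsub h).1
        · rw [Set.mem_singleton_iff] at h; subst h; exact hAB
      · intro hSigeq
        have hxSig : x ∈ Sig := hSigeq ▸ hx1.1
        rcases hxSig with h | h
        · exact hx2 h
        · exact hx1.2 h
    refine hnr Sig hSigsub ?_
    apply Set.Subset.antisymm
    · intro M hM
      have hMT' : M ∈ Models star T' := by
        intro p hp
        by_cases hpA' : p = (A', B)
        · subst hpA'
          have hABm : star (Sdeg A M) ≤ Sdeg B M :=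
            hM (A, B) (Set.mem_union_right _ rfl)
          exact le_trans (RL.star_mono hs (RL.Sdeg_anti hA'ge M)) hABm
        · exact hM p (Set.mem_union_left _ ⟨hp, fun h => hpA' (Set.mem_singleton_iff.mp h)⟩)
      rw [heq, hmodΓΔ] at hMT'
      exact hMT'
    · intro M hM p hp
      rcases hp with h | h
      · exact hM p (hEsub h).1
      · rw [Set.mem_singleton_iff] at h; subst h; exact hM _ hAB
  · -- case: the new implication is not in T'
    have hsub : T' ⊆ Δ \ {(A, B)} := by
      intro x hx
      have hxΓ : x ∈ Γ := hT'.subset hx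
      rw [hΓ] at hxΓ
      rcases hxΓ with h | h
      · exact h
      · rw [Set.mem_singleton_iff] at h; exact absurd (h ▸ hx) hmem
    refine hnr (Δ \ {(A, B)}) (Set.sdiff_singleton_ssubset.mpr hAB) ?_
    apply Set.Subset.antisymm
    · intro M hM
      have hMT' : M ∈ Models star T' := RL.models_anti hsub hM
      rw [heq, hmodΓΔ] at hMT'
      exact hMT'
    · exact RL.models_anti Set.diff_subset
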